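/- arXiv:math/0208138 — 2 statements merged into one kernel-verified Lean document; each statement's English description precedes it below -/
import Mathlib

section
/- Let W be a finite Coxeter group, S its set of reflections, and for each irreducible representation τ of W let p(τ) be the scalar by which Σ_{s∈S} s acts on τ. Then for every irreducible τ not isomorphic to the trivial or the sign representation, −|S| < p(τ) < |S|; moreover p(triv) = |S| and p(sign) = −|S|. -/
/-!
Each reflection `s` is an involution, so on `τ` it is diagonalizable with eigenvalues `±1` and
its trace is an integer `a - b` with `a + b = dim τ`; it equals `± dim τ` only if `s` acts by `±1`.
Summing over `S`, `p(τ) · dim τ = Σ_{s∈S} χ_τ(s)` lies in `[-|S| dim τ, |S| dim τ]`, and an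
endpoint is attained only if every reflection acts by the same scalar `±1`, i.e. `τ` is trivial
or sign on `S`.
-/

open Module

theorem LinearMap.exists_trace_eq_sub_of_mul_self_eq_one {K V : Type*} [Field K] [NeZero (2 : K)]
    [AddCommGroup V] [Module K V] [FiniteDimensional K V]
    (f : Module.End K V) (hf : f * f = 1) :
    ∃ a b : ℕ, a + b = finrank K V ∧ LinearMap.trace K V f = (a : K) - b := by
  have hff : ∀ v : V, f (f v) = v := fun v => congrArg (fun g : Module.End K V => g v) hf
  -- `p` projects onto the `1`-eigenspace along the `-1`-eigenspace, and `f = p - (1 - p)`.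
  set p : Module.End K V := (2⁻¹ : K) • (1 + f)
  have hp : IsIdempotentElem p := by
    ext v
    simp only [p, Module.End.mul_apply, LinearMap.smul_apply, LinearMap.add_apply,
      Module.End.one_apply, map_smul, map_add, hff]
    match_scalars <;> field_simp <;> ring
  have hf_eq : f = p - (1 - p) := by
    ext v
    simp only [p, LinearMap.sub_apply, LinearMap.smul_apply, LinearMap.add_apply,
      Module.End.one_apply]
    match_scalars <;> field_simp <;> ring
  refine ⟨finrank K (range p), finrank K (ker p),
    Submodule.finrank_add_eq_of_isCompl (IsIdempotentElem.isCompl hp), ?_⟩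
  rw [hf_eq, map_sub, (IsIdempotentElem.isProj_range _ hp).trace,
    IsIdempotentElem.ker_eq_range_one_sub hp, (IsIdempotentElem.isProj_range _ hp.one_sub).trace]

theorem FDRep.exists_character_eq_intCast_of_mul_self_eq_one {K G : Type*} [Field K]
    [NeZero (2 : K)] [Monoid G] (V : FDRep K G) {g : G} (hg : g * g = 1) :
    ∃ k : ℤ, V.character g = k ∧ -(finrank K V : ℤ) ≤ k ∧ k ≤ finrank K V := by
  have hρ : V.ρ g * V.ρ g = 1 := by rw [← map_mul, hg, map_one]
  obtain ⟨a, b, hab, htr⟩ := LinearMap.exists_trace_eq_sub_of_mul_self_eq_one (V.ρ g) hρ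
  exact ⟨a - b, by rw [FDRep.character, htr]; push_cast; rfl, by omega, by omega⟩

namespace Finset

variable {ι : Type*} {S : Finset ι} {k : ι → ℤ} {d m : ℤ}

theorem lt_card_of_sum_eq_mul (hd : 0 ≤ d) (hk : ∀ s ∈ S, k s ≤ d) (hlt : ∃ s ∈ S, k s < d)
    (hsum : ∑ s ∈ S, k s = m * d) : m < S.card := by
  have h : m * d < S.card * d := by
    simpa [hsum, mul_comm] using sum_lt_sum hk hlt
  exact lt_of_mul_lt_mul_right h hd

theorem neg_card_lt_of_sum_eq_mul (hd : 0 ≤ d) (hk : ∀ s ∈ S, -d ≤ k s)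
    (hlt : ∃ s ∈ S, -d < k s) (hsum : ∑ s ∈ S, k s = m * d) : -(S.card : ℤ) < m := by
  obtain ⟨s₀, hs₀, hlt₀⟩ := hlt
  refine neg_lt.mp (lt_card_of_sum_eq_mul (k := (-k ·)) hd (fun s hs => neg_le.mp (hk s hs))
    ⟨s₀, hs₀, neg_lt.mp hlt₀⟩ ?_)
  simp [hsum]

end Finset

theorem stmt3_general {W : Type} [Group W] (S : Finset W)
    (hs : ∀ s ∈ S, s * s = 1)
    (ε : W →* ℂˣ) (hε : ∀ s ∈ S, (ε s : ℂ) = -1)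
    (V : FDRep ℂ W)
    (hnt : ¬ ∀ s ∈ S, V.character s = (finrank ℂ V : ℂ))
    (hns : ¬ ∀ s ∈ S, V.character s = -(finrank ℂ V : ℂ)) :
    (∀ m : ℤ, (∑ s ∈ S, V.character s) = (m : ℂ) * (finrank ℂ V : ℂ) →
        -(S.card : ℤ) < m ∧ m < (S.card : ℤ))
      ∧ (∑ _s ∈ S, (1 : ℂ)) = (S.card : ℂ)
      ∧ (∑ s ∈ S, (ε s : ℂ)) = -(S.card : ℂ) := by
  refine ⟨fun m hm => ?_, by simp, by simp [Finset.sum_congr rfl hε]⟩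
  choose! k hk hk_ge hk_le using fun s (hsS : s ∈ S) =>
    V.exists_character_eq_intCast_of_mul_self_eq_one (hs s hsS)
  have hsum : ∑ s ∈ S, k s = m * finrank ℂ V := by
    exact_mod_cast (Finset.sum_congr rfl hk).symm.trans hm
  push Not at hnt hns
  obtain ⟨s₁, hs₁, hne₁⟩ := hnt
  obtain ⟨s₂, hs₂, hne₂⟩ := hns
  have hlt₁ : k s₁ < finrank ℂ V :=
    (hk_le s₁ hs₁).lt_of_ne fun h => hne₁ (by simp [hk s₁ hs₁, h])
  have hlt₂ : -(finrank ℂ V : ℤ) < k s₂ :=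
    (hk_ge s₂ hs₂).lt_of_ne fun h => hne₂ (by simp [hk s₂ hs₂, ← h])
  exact ⟨Finset.neg_card_lt_of_sum_eq_mul (by positivity) hk_ge ⟨s₂, hs₂, hlt₂⟩ hsum,
    Finset.lt_card_of_sum_eq_mul (by positivity) hk_le ⟨s₁, hs₁, hlt₁⟩ hsum⟩

/-- let `W` be a finite Coxeter group with set of reflections `S`
(involutions generating `W`), `ε` its sign character (`ε(s) = -1` for all
reflections `s`), and for an irreducible representation `τ` let `p(τ)` be the
scalar by which `Σ_{s∈S} s` acts, so `Σ_{s∈S} Tr(s,τ) = p(τ)·dim τ`.  If `τ`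
is neither trivial nor sign (on `S`), then `-|S| < p(τ) < |S|`; moreover
`p(triv) = |S|` and `p(sign) = -|S|`. -/
theorem stmt3 {W : Type} [Group W] [Fintype W] (S : Finset W)
    (hgen : Subgroup.closure (S : Set W) = ⊤)
    (hs : ∀ s ∈ S, s * s = 1)
    (ε : W →* ℂˣ) (hε : ∀ s ∈ S, (ε s : ℂ) = -1)
    (V : FDRep ℂ W) [CategoryTheory.Simple V]
    (hnt : ¬ ∀ s ∈ S, V.character s = (finrank ℂ V : ℂ))
    (hns : ¬ ∀ s ∈ S, V.character s = -(finrank ℂ V : ℂ)) :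
    (∀ m : ℤ, (∑ s ∈ S, V.character s) = (m : ℂ) * (finrank ℂ V : ℂ) →
        -(S.card : ℤ) < m ∧ m < (S.card : ℤ))
      ∧ (∑ _s ∈ S, (1 : ℂ)) = (S.card : ℂ)
      ∧ (∑ s ∈ S, (ε s : ℂ)) = -(S.card : ℂ) :=
  stmt3_general S hs ε hε V hnt hns
end

section
/- Let W be a finite Coxeter group acting on h of dimension ℓ, S the set of reflections, and c: S → ℂ a W-invariant function. The assignment w ↦ Id, x ↦ 0, y ↦ 0 extends to a one-dimensional representation of H_c(W) if and only if 2·Σ_{s∈S} c_s = ℓ. -/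
open Module

/-- let `W` be a finite Coxeter group acting (irreducibly) on `h`
of dimension `ℓ`, `S` its set of reflections (with roots `α_s`, coroots
`α_s^∨`), and `c : S → ℂ` a `W`-invariant function.  The assignment
`w ↦ Id, x ↦ 0, y ↦ 0` extends to a one-dimensional representation of the
rational Cherednik algebra `H_c(W)` — i.e. the defining commutation relation
collapses, so that `⟨y,x⟩ = Σ_{s∈S} c_s ⟨y,α_s⟩⟨α_s^∨,x⟩` for all `y,x` —
if and only if `2·Σ_{s∈S} c_s = ℓ`. -/
theorem stmt8 {V : Type*} [AddCommGroup V] [Module ℂ V] [FiniteDimensional ℂ V]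
    {G : Type*} [Group G] [Fintype G] (ρ : Representation ℂ G V)
    (hirr : ∀ p : Submodule ℂ V, (∀ g : G, ∀ v ∈ p, ρ g v ∈ p) → p = ⊥ ∨ p = ⊤)
    (hdim : 0 < finrank ℂ V)
    (S : Finset G)
    (hconj : ∀ s ∈ S, ∀ g : G, g * s * g⁻¹ ∈ S)
    (α : G → Module.Dual ℂ V) (β : G → V)
    (hrefl : ∀ s ∈ S, ∀ v : V, ρ s v = v - α s v • β s)
    (hpair : ∀ s ∈ S, α s (β s) = 2)
    (c : G → ℂ)
    (hcinv : ∀ s ∈ S, ∀ g : G, c (g * s * g⁻¹) = c s) :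
    (∀ (y : V) (x : Module.Dual ℂ V),
        x y = ∑ s ∈ S, c s * (α s y) * (x (β s))) ↔
      2 * ∑ s ∈ S, c s = (finrank ℂ V : ℂ) := by
  classical
  -- the operator T = Σ c_s β_s ⊗ α_s
  set T : Module.End ℂ V := ∑ s ∈ S, c s • dualTensorHom ℂ V V (α s ⊗ₜ β s) with hT
  have hTapp : ∀ v : V, T v = ∑ s ∈ S, c s • (α s v • β s) := by
    intro v
    rw [hT]
    simp [LinearMap.sum_apply, dualTensorHom_apply]
  -- trace of T
  have htr : LinearMap.trace ℂ V T = 2 * ∑ s ∈ S, c s := by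
    rw [hT, map_sum, Finset.mul_sum]
    refine Finset.sum_congr rfl fun s hs => ?_
    rw [map_smul, LinearMap.trace_eq_contract_apply, contractLeft_apply, hpair s hs,
      smul_eq_mul]
    ring
  constructor
  · -- forward: the relation says T = id, take traces
    intro h
    have hTid : T = LinearMap.id := by
      ext v
      have sep : ∀ x : Module.Dual ℂ V, x (T v - v) = 0 := by
        intro x
        rw [map_sub, hTapp, map_sum, h v x, sub_eq_zero]
        refine Finset.sum_congr rfl fun s hs => ?_
        rw [map_smul, map_smul, smul_eq_mul, smul_eq_mul, mul_assoc]
      have := (Module.forall_dual_apply_eq_zero_iff ℂ (T v - v)).mp sep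
      simpa [sub_eq_zero] using this
    rw [← htr, hTid, LinearMap.trace_id]
  · -- backward: Schur argument
    intro hsum
    -- conjugation identity for the rank-one pieces
    have key : ∀ s ∈ S, ∀ g : G, ∀ w : V,
        α (g * s * g⁻¹) w • β (g * s * g⁻¹) = α s (ρ g⁻¹ w) • ρ g (β s) := by
      intro s hs g w
      have h1 := hrefl (g * s * g⁻¹) (hconj s hs g) w
      have h2 : ρ (g * s * g⁻¹) w = w - α s (ρ g⁻¹ w) • ρ g (β s) := by
        have hgg : ρ (g * s * g⁻¹) w = ρ g (ρ s (ρ g⁻¹ w)) := by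
          simp [map_mul, Module.End.mul_apply]
        have hinv : ρ g (ρ g⁻¹ w) = w := by
          have : ρ g * ρ g⁻¹ = 1 := by rw [← map_mul, mul_inv_cancel, map_one]
          calc ρ g (ρ g⁻¹ w) = (ρ g * ρ g⁻¹) w := rfl
            _ = w := by rw [this]; rfl
        rw [hgg, hrefl s hs (ρ g⁻¹ w), map_sub, map_smul, hinv]
      have := h1.symm.trans h2
      exact sub_right_inj.mp this
    -- T commutes with the action
    have hcomm : ∀ g : G, ∀ v : V, T (ρ g v) = ρ g (T v) := by
      intro g v
      rw [hTapp, hTapp, map_sum]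
      refine (Finset.sum_bij' (fun s (_ : s ∈ S) => g * s * g⁻¹) (fun t _ => g⁻¹ * t * g)
        (fun s hs => hconj s hs g) (fun t ht => by simpa using hconj t ht g⁻¹)
        (fun s hs => by group) (fun t ht => by group) (fun s hs => ?_)).symm
      rw [hcinv s hs g, key s hs g (ρ g v)]
      have hinv : ρ g⁻¹ (ρ g v) = v := by
        have : ρ g⁻¹ * ρ g = 1 := by rw [← map_mul, inv_mul_cancel, map_one]
        calc ρ g⁻¹ (ρ g v) = (ρ g⁻¹ * ρ g) v := rfl
          _ = v := by rw [this]; rfl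
      rw [hinv, map_smul, map_smul]
    -- Schur: T is a scalar
    have : Nontrivial V := Module.nontrivial_of_finrank_pos hdim
    obtain ⟨μ, hμ⟩ := Module.End.exists_eigenvalue T
    obtain ⟨v₀, hv₀⟩ := hμ.exists_hasEigenvector
    set p : Submodule ℂ V := Module.End.eigenspace T μ with hp
    have hinv : ∀ g : G, ∀ v ∈ p, ρ g v ∈ p := by
      intro g v hv
      have : T v = μ • v := by
        rwa [Module.End.mem_eigenspace_iff] at hv
      rw [Module.End.mem_eigenspace_iff, hcomm g v, this, map_smul]
    have hptop : p = ⊤ := by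
      rcases hirr p hinv with hbot | htop
      · exfalso
        have h1 : v₀ ∈ p := hv₀.1
        rw [hbot, Submodule.mem_bot] at h1
        exact hv₀.2 h1
      · exact htop
    have hTμ : ∀ v : V, T v = μ • v := by
      intro v
      have : v ∈ p := hptop ▸ Submodule.mem_top
      rwa [Module.End.mem_eigenspace_iff] at this
    -- compute μ via trace
    have hTsmul : T = μ • (LinearMap.id : Module.End ℂ V) := by
      ext v; simp [hTμ v]
    have htr2 : LinearMap.trace ℂ V T = μ * (finrank ℂ V : ℂ) := by
      rw [hTsmul, map_smul, LinearMap.trace_id, smul_eq_mul]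
    have hfr : (finrank ℂ V : ℂ) ≠ 0 := by
      exact_mod_cast Nat.cast_ne_zero.mpr hdim.ne'
    have hμ1 : μ = 1 := by
      have : μ * (finrank ℂ V : ℂ) = (finrank ℂ V : ℂ) := by
        rw [← htr2, htr, hsum]
      field_simp at this
      tauto
    -- conclude
    intro y x
    have : T y = y := by rw [hTμ y, hμ1, one_smul]
    calc x y = x (T y) := by rw [this]
      _ = ∑ s ∈ S, c s * α s y * x (β s) := by
          rw [hTapp, map_sum]
          refine Finset.sum_congr rfl fun s hs => ?_
          rw [map_smul, map_smul, smul_eq_mul, smul_eq_mul, mul_assoc]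
end
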